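/- Let $P$ and $Q$ be $p \times p$ Hermitian matrices and $R = P + Q$, with eigenvalues of each matrix arranged in decreasing order. Then $\lambda_i(R) \le \lambda_j(P) + \lambda_{i-j+1}(Q)$ for all $1 \le j \le i \le p$, and $\lambda_i(R) \ge \lambda_j(P) + \lambda_{i-j+p}(Q)$ for all $1 \le i \le j \le p$ (Weyl's inequalities). -/

import Mathlib

/-!
Weyl's inequalities by dimension counting. If `R = P + Q` and one picks eigenvector spans
`U_R`, `U_P`, `U_Q` whose dimensions add up to more than `2p`, they share a nonzero vector `x`.
On `U_R` the Rayleigh quotient of `R` is at least `λ_i(R)`, on `U_P` and `U_Q` those of `P` and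
`Q` are at most `λ_j(P)` and `λ_k(Q)`, and the Rayleigh quotient is additive, so
`λ_i(R) ≤ λ_j(P) + λ_k(Q)`. The reverse inequalities follow by applying this to `-P` and `-Q`.
-/

open Finset

/-- `μ` is a decreasing enumeration of the eigenvalues of the Hermitian matrix `M`. -/
def IsSortedEigs {p : ℕ} (M : Matrix (Fin p) (Fin p) ℂ) (hM : M.IsHermitian)
    (μ : Fin p → ℝ) : Prop :=
  Antitone μ ∧ ∃ σ : Equiv.Perm (Fin p), μ = hM.eigenvalues ∘ σ

open Module Submodule RCLike

namespace Submodule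

variable {K V : Type*} [DivisionRing K] [AddCommGroup V] [Module K V] [FiniteDimensional K V]

theorem finrank_add_finrank_le_finrank_inf_add (s t : Submodule K V) :
    finrank K s + finrank K t ≤ finrank K ↥(s ⊓ t) + finrank K V := by
  have := s.finrank_sup_add_finrank_inf_eq t
  have := (s ⊔ t).finrank_le
  omega

theorem exists_ne_zero_mem_of_two_mul_finrank_lt (s₁ s₂ s₃ : Submodule K V)
    (h : 2 * finrank K V < finrank K s₁ + finrank K s₂ + finrank K s₃) :
    ∃ x ≠ 0, x ∈ s₁ ∧ x ∈ s₂ ∧ x ∈ s₃ := by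
  have h₁₂ := s₁.finrank_add_finrank_le_finrank_inf_add s₂
  have h₁₂₃ := (s₁ ⊓ s₂).finrank_add_finrank_le_finrank_inf_add s₃
  obtain ⟨x, ⟨⟨hx₁, hx₂⟩, hx₃⟩, hx⟩ := exists_mem_ne_zero_of_ne_bot
    (one_le_finrank_iff.mp (by omega) : s₁ ⊓ s₂ ⊓ s₃ ≠ ⊥)
  exact ⟨x, hx, hx₁, hx₂, hx₃⟩

end Submodule

namespace OrthonormalBasis

variable {𝕜 E ι : Type*} [RCLike 𝕜] [NormedAddCommGroup E] [InnerProductSpace 𝕜 E] [Fintype ι]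
  (b : OrthonormalBasis ι 𝕜 E)

theorem finrank_span_image (S : Finset ι) : finrank 𝕜 (span 𝕜 (b '' S)) = #S := by
  have : LinearIndependent 𝕜 fun i : (S : Set ι) => b i :=
    b.orthonormal.linearIndependent.comp _ Subtype.val_injective
  rw [Set.image_eq_range, finrank_span_eq_card this]
  simp

theorem repr_apply_eq_zero_of_mem_span_image {S : Set ι} {x : E} (hx : x ∈ span 𝕜 (b '' S))
    {i : ι} (hi : i ∉ S) : b.repr x i = 0 := by
  rw [b.repr_apply_apply]
  refine mem_orthogonal_singleton_iff_inner_right.mp ((span_le.mpr ?_) hx)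
  rintro _ ⟨j, hj, rfl⟩
  exact mem_orthogonal_singleton_iff_inner_right.mpr (b.orthonormal.2 fun h => hi (h ▸ hj))

theorem norm_sq_eq_sum (x : E) : ‖x‖ ^ 2 = ∑ i, ‖b.repr x i‖ ^ 2 := by
  rw [← b.repr.norm_map, EuclideanSpace.norm_sq_eq]

variable {b} {T : E →ₗ[𝕜] E} {e : ι → ℝ}

theorem re_inner_map_self_eq_sum (hT : ∀ i, T (b i) = (e i : 𝕜) • b i) (x : E) :
    re (inner 𝕜 x (T x)) = ∑ i, e i * ‖b.repr x i‖ ^ 2 := by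
  have hTx : T x = ∑ i, ((e i : 𝕜) * b.repr x i) • b i := by
    conv_lhs => rw [← b.sum_repr x]
    simp only [map_sum, map_smul, hT, smul_smul, mul_comm (b.repr x _)]
  rw [hTx, inner_sum, map_sum]
  refine sum_congr rfl fun i _ => ?_
  rw [inner_smul_right, ← inner_conj_symm, ← b.repr_apply_apply, mul_assoc, mul_conj]
  norm_cast

theorem re_inner_map_self_le_of_mem_span_image (hT : ∀ i, T (b i) = (e i : 𝕜) • b i)
    {S : Set ι} {a : ℝ} (ha : ∀ i ∈ S, e i ≤ a) {x : E} (hx : x ∈ span 𝕜 (b '' S)) :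
    re (inner 𝕜 x (T x)) ≤ a * ‖x‖ ^ 2 := by
  rw [re_inner_map_self_eq_sum hT, b.norm_sq_eq_sum, mul_sum]
  refine sum_le_sum fun i _ => ?_
  by_cases hi : i ∈ S
  · exact mul_le_mul_of_nonneg_right (ha i hi) (sq_nonneg _)
  · simp [b.repr_apply_eq_zero_of_mem_span_image hx hi]

theorem le_re_inner_map_self_of_mem_span_image (hT : ∀ i, T (b i) = (e i : 𝕜) • b i)
    {S : Set ι} {a : ℝ} (ha : ∀ i ∈ S, a ≤ e i) {x : E} (hx : x ∈ span 𝕜 (b '' S)) :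
    a * ‖x‖ ^ 2 ≤ re (inner 𝕜 x (T x)) := by
  rw [re_inner_map_self_eq_sum hT, b.norm_sq_eq_sum, mul_sum]
  refine sum_le_sum fun i _ => ?_
  by_cases hi : i ∈ S
  · exact mul_le_mul_of_nonneg_right (ha i hi) (sq_nonneg _)
  · simp [b.repr_apply_eq_zero_of_mem_span_image hx hi]

end OrthonormalBasis

section Weyl

variable {𝕜 E ι : Type*} [RCLike 𝕜] [NormedAddCommGroup E] [InnerProductSpace 𝕜 E] [Fintype ι]
  {T T₁ T₂ : E →ₗ[𝕜] E} {b b₁ b₂ : OrthonormalBasis ι 𝕜 E} {e e₁ e₂ : ι → ℝ}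

theorem neg_apply_eigenbasis (hT : ∀ i, T (b i) = (e i : 𝕜) • b i) (i : ι) :
    (-T) (b i) = ((-e i : ℝ) : 𝕜) • b i := by
  rw [LinearMap.neg_apply, hT, ofReal_neg, neg_smul]

theorem le_add_of_eigenbases (hT : T = T₁ + T₂) (h : ∀ i, T (b i) = (e i : 𝕜) • b i)
    (h₁ : ∀ i, T₁ (b₁ i) = (e₁ i : 𝕜) • b₁ i) (h₂ : ∀ i, T₂ (b₂ i) = (e₂ i : 𝕜) • b₂ i)
    {S S₁ S₂ : Finset ι} (hcard : 2 * Fintype.card ι < #S + #S₁ + #S₂) {a a₁ a₂ : ℝ}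
    (ha : ∀ i ∈ S, a ≤ e i) (ha₁ : ∀ i ∈ S₁, e₁ i ≤ a₁) (ha₂ : ∀ i ∈ S₂, e₂ i ≤ a₂) :
    a ≤ a₁ + a₂ := by
  have : FiniteDimensional 𝕜 E := .of_basis b.toBasis
  obtain ⟨x, hx0, hx, hx₁, hx₂⟩ := exists_ne_zero_mem_of_two_mul_finrank_lt
    (span 𝕜 (b '' S)) (span 𝕜 (b₁ '' S₁)) (span 𝕜 (b₂ '' S₂))
    (by rwa [b.finrank_span_image, b₁.finrank_span_image, b₂.finrank_span_image,
      finrank_eq_card_basis b.toBasis])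
  have hsum : re (inner 𝕜 x (T x)) = re (inner 𝕜 x (T₁ x)) + re (inner 𝕜 x (T₂ x)) := by
    rw [hT, LinearMap.add_apply, inner_add_right, map_add]
  have hR := OrthonormalBasis.le_re_inner_map_self_of_mem_span_image h ha hx
  have hP := OrthonormalBasis.re_inner_map_self_le_of_mem_span_image h₁ ha₁ hx₁
  have hQ := OrthonormalBasis.re_inner_map_self_le_of_mem_span_image h₂ ha₂ hx₂
  have hx_pos : 0 < ‖x‖ ^ 2 := by positivity
  exact le_of_mul_le_mul_right (by linarith) hx_pos

end Weyl

theorem Matrix.IsHermitian.toEuclideanLin_eigenvectorBasis {𝕜 n : Type*} [RCLike 𝕜] [Fintype n]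
    [DecidableEq n] {A : Matrix n n 𝕜} (hA : A.IsHermitian) (j : n) :
    Matrix.toEuclideanLin A (hA.eigenvectorBasis j) =
      (hA.eigenvalues j : 𝕜) • hA.eigenvectorBasis j := by
  apply WithLp.ofLp_injective
  rw [Matrix.ofLp_toLpLin, Matrix.toLin'_apply, hA.mulVec_eigenvectorBasis, WithLp.ofLp_smul,
    real_smul_eq_coe_smul (K := 𝕜)]

theorem IsSortedEigs.exists_orthonormalBasis {p : ℕ} {M : Matrix (Fin p) (Fin p) ℂ}
    {hM : M.IsHermitian} {μ : Fin p → ℝ} (h : IsSortedEigs M hM μ) :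
    ∃ b : OrthonormalBasis (Fin p) ℂ (EuclideanSpace ℂ (Fin p)),
      ∀ i, Matrix.toEuclideanLin M (b i) = (μ i : ℂ) • b i := by
  obtain ⟨-, σ, rfl⟩ := h
  exact ⟨hM.eigenvectorBasis.reindex σ.symm, fun i => by
    simpa using hM.toEuclideanLin_eigenvectorBasis (σ i)⟩

/-- Weyl's inequalities: for Hermitian `P`, `Q` and `R = P + Q` with eigenvalues in
decreasing order (`0`-indexed here), `λ_i(R) ≤ λ_j(P) + λ_{i-j}(Q)` for `j ≤ i < p`,
and `λ_i(R) ≥ λ_j(P) + λ_{p-1-(j-i)}(Q)` for `i ≤ j < p`. -/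
theorem weyl_inequalities {p : ℕ} (P Q : Matrix (Fin p) (Fin p) ℂ)
    (hP : P.IsHermitian) (hQ : Q.IsHermitian)
    (μP μQ μR : Fin p → ℝ) (hμP : IsSortedEigs P hP μP) (hμQ : IsSortedEigs Q hQ μQ)
    (hμR : IsSortedEigs (P + Q) (hP.add hQ) μR) :
    (∀ (i j : ℕ) (hi : i < p) (hji : j ≤ i),
      μR ⟨i, hi⟩ ≤ μP ⟨j, by omega⟩ + μQ ⟨i - j, by omega⟩) ∧
    (∀ (i j : ℕ) (hj : j < p) (hij : i ≤ j),
      μP ⟨j, hj⟩ + μQ ⟨p - 1 - (j - i), by omega⟩ ≤ μR ⟨i, by omega⟩) := by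
  obtain ⟨bP, hbP⟩ := hμP.exists_orthonormalBasis
  obtain ⟨bQ, hbQ⟩ := hμQ.exists_orthonormalBasis
  obtain ⟨bR, hbR⟩ := hμR.exists_orthonormalBasis
  have hsum := map_add Matrix.toEuclideanLin P Q
  refine ⟨fun i j hi hji => ?_, fun i j hj hij => ?_⟩
  · exact le_add_of_eigenbases hsum hbR hbP hbQ
      (S := Iic ⟨i, hi⟩) (S₁ := Ici ⟨j, by omega⟩) (S₂ := Ici ⟨i - j, by omega⟩)
      (by simp only [Fin.card_Iic, Fin.card_Ici, Fintype.card_fin]; omega)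
      (fun k hk => hμR.1 (mem_Iic.1 hk))
      (fun k hk => hμP.1 (mem_Ici.1 hk)) (fun k hk => hμQ.1 (mem_Ici.1 hk))
  · have := le_add_of_eigenbases (by rw [hsum, neg_add]) (neg_apply_eigenbasis hbR)
      (neg_apply_eigenbasis hbP) (neg_apply_eigenbasis hbQ)
      (S := Ici ⟨i, by omega⟩) (S₁ := Iic ⟨j, hj⟩) (S₂ := Iic ⟨p - 1 - (j - i), by omega⟩)
      (by simp only [Fin.card_Iic, Fin.card_Ici, Fintype.card_fin]; omega)
      (fun k hk => neg_le_neg (hμR.1 (mem_Ici.1 hk)))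
      (fun k hk => neg_le_neg (hμP.1 (mem_Iic.1 hk)))
      (fun k hk => neg_le_neg (hμQ.1 (mem_Iic.1 hk)))
    linarith
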